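/- Let R be a Noetherian local domain with fraction field K, I ⊆ R a nonzero ideal, and suppose the integral closure of the Rees algebra R[It] in R[t] is a finite R[It]-module (e.g. R excellent). Then there exists a positive integer n_0 such that for all n ≥ 1, the ideal (overline{I^{n_0}})^n is integrally closed, where overline{J} denotes the integral closure of an ideal J. -/

import Mathlib

/-! The integral closure `S` of `R[It]` in `R[t]` is graded, with degree-`m` piece
`\overline{I^m} t^m`. Since `S` is a finite, hence Noetherian, `R[It]`-module, the submodules
spanned by the homogeneous elements of `S` of degree `≤ k` stabilize at some `N`. Expanding an
element of `\overline{I^j} t^j` in terms of these generators puts it in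
`∑_{d ≤ N} I^{j-d} \overline{I^d}`, which for `j = (N+1) n` lies in `(\overline{I^{N+1}})^n`.
With `n₀ = N + 1` this gives
`\overline{(\overline{I^{n₀}})^n} ⊆ \overline{I^{n₀ n}} ⊆ (\overline{I^{n₀}})^n`. -/

/-- `a` is integral over the ideal `I`: it satisfies an equation
`a^n + c₁ a^{n-1} + ⋯ + cₙ = 0` with `cᵢ ∈ I^i`. -/
def IsIntegralOverIdeal {R : Type*} [CommRing R] (I : Ideal R) (a : R) : Prop :=
  ∃ n : ℕ, 0 < n ∧ ∃ c : ℕ → R, (∀ i : ℕ, 1 ≤ i → i ≤ n → c i ∈ I ^ i) ∧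
    a ^ n + ∑ i ∈ Finset.Icc 1 n, c i * a ^ (n - i) = 0

open Polynomial

theorem Polynomial.degree_sum_Icc_C_mul_X_pow_sub_lt {S : Type*} [Semiring S] (k : ℕ)
    (d : ℕ → S) :
    (∑ i ∈ Finset.Icc 1 k, C (d i) * X ^ (k - i)).degree < (k : WithBot ℕ) := by
  refine (degree_sum_le _ _).trans_lt ((Finset.sup_lt_iff (WithBot.bot_lt_coe k)).mpr ?_)
  intro i hi
  refine (degree_C_mul_X_pow_le _ _).trans_lt ?_
  rw [Finset.mem_Icc] at hi
  exact WithBot.coe_lt_coe.mpr (Nat.sub_lt (hi.1.trans hi.2) hi.1)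

namespace Ideal

variable {R : Type*} [CommRing R] (I : Ideal R)

noncomputable def reesClosureComponent (m : ℕ) : Ideal R :=
  ((integralClosure (reesAlgebra I) R[X]).restrictScalars R).toSubmodule.comap (monomial m)

variable {I} in
theorem mem_reesClosureComponent {m : ℕ} {a : R} :
    a ∈ I.reesClosureComponent m ↔ monomial m a ∈ integralClosure (reesAlgebra I) R[X] :=
  Iff.rfl

theorem pow_le_reesClosureComponent (m : ℕ) : I ^ m ≤ I.reesClosureComponent m :=
  fun _ ha ↦ isIntegral_algebraMap (x := (⟨_, reesAlgebra.monomial_mem.mpr ha⟩ : reesAlgebra I))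

theorem reesClosureComponent_zero : I.reesClosureComponent 0 = ⊤ := by
  simpa using pow_le_reesClosureComponent I 0

theorem reesClosureComponent_mul_le (i j : ℕ) :
    I.reesClosureComponent i * I.reesClosureComponent j ≤ I.reesClosureComponent (i + j) :=
  Ideal.mul_le.mpr fun a ha b hb ↦ by
    rw [mem_reesClosureComponent, ← monomial_mul_monomial]
    exact Subalgebra.mul_mem _ ha hb

theorem reesClosureComponent_pow_le (m n : ℕ) :
    I.reesClosureComponent m ^ n ≤ I.reesClosureComponent (m * n) := by
  induction n with
  | zero => simp [reesClosureComponent_zero]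
  | succ n ih =>
    rw [pow_succ, Nat.mul_succ]
    exact (Ideal.mul_mono_left ih).trans (reesClosureComponent_mul_le I _ _)

variable {I} in
theorem mem_reesClosureComponent_of_isIntegralOverIdeal [Nontrivial R] {J : Ideal R} {m : ℕ}
    (hJ : ∀ i, J ^ i ≤ I.reesClosureComponent (m * i)) {a : R} (ha : IsIntegralOverIdeal J a) :
    a ∈ I.reesClosureComponent m := by
  obtain ⟨k, hk, c, hc, heq⟩ := ha
  set P : R[X][X] := X ^ k + ∑ i ∈ Finset.Icc 1 k, C (monomial (m * i) (c i)) * X ^ (k - i)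
  have hlower := degree_sum_Icc_C_mul_X_pow_sub_lt k fun i ↦ monomial (m * i) (c i)
  have hmonic : P.Monic := monic_X_pow_add hlower
  have hdegree : P.natDegree = k := by
    rw [natDegree_add_eq_left_of_degree_lt (by rwa [degree_X_pow]), natDegree_X_pow]
  have heval : P.eval (monomial m a) = 0 := by
    have hterm : ∀ i ∈ Finset.Icc 1 k, monomial (m * i) (c i) * monomial m a ^ (k - i) =
        monomial (m * k) (c i * a ^ (k - i)) := fun i hi ↦ by
      rw [Finset.mem_Icc] at hi
      rw [monomial_pow, monomial_mul_monomial, ← mul_add, Nat.add_sub_cancel' hi.2]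
    simp only [P, eval_add, eval_finsetSum, eval_mul, eval_C, eval_pow, eval_X]
    rw [Finset.sum_congr rfl hterm, ← map_sum, monomial_pow, ← map_add, heq, map_zero]
  have hcoeff : ∀ j, IsIntegral (reesAlgebra I) (P.coeff j) := by
    intro j
    simp only [P, coeff_add, coeff_X_pow, finsetSum_coeff, coeff_C_mul_X_pow]
    refine IsIntegral.add ?_ (IsIntegral.sum _ fun i hi ↦ ?_)
    · split_ifs
      exacts [isIntegral_one, isIntegral_zero]
    · split_ifs
      exacts [hJ i (hc i (Finset.mem_Icc.mp hi).1 (Finset.mem_Icc.mp hi).2), isIntegral_zero]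
  exact IsIntegral.of_aeval_monic_of_isIntegral_coeff hmonic (by omega)
    (by rw [heval]; exact isIntegral_zero) hcoeff

variable {I} in
theorem isIntegralOverIdeal_of_mem_reesClosureComponent [Nontrivial R] {m : ℕ} {a : R}
    (ha : a ∈ I.reesClosureComponent m) : IsIntegralOverIdeal (I ^ m) a := by
  obtain ⟨q, hmonic, hroot⟩ := ha
  set k := q.natDegree
  set c : ℕ → R := fun i ↦ (q.coeff (k - i) : R[X]).coeff (m * i)
  have hk : 0 < k := Nat.pos_of_ne_zero fun hk ↦ by
    rw [hmonic.natDegree_eq_zero.mp hk, eval₂_one] at hroot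
    exact one_ne_zero hroot
  -- the coefficient of `t ^ (m * k)` in the equation of integral dependence of `a t ^ m`
  have hcoeff : ∑ i ∈ Finset.range (k + 1), c i * a ^ (k - i) = 0 := by
    have := congrArg (coeff · (m * k)) hroot
    simp only [eval₂_eq_sum_range, finsetSum_coeff, coeff_zero, monomial_pow] at this
    rw [← Finset.sum_range_reflect] at this
    rw [← this]
    refine Finset.sum_congr rfl fun i hi ↦ ?_
    have hik : i ≤ k := Nat.lt_succ_iff.mp (Finset.mem_range.mp hi)
    rw [Nat.add_sub_cancel, show m * k = m * i + m * (k - i) by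
      rw [← mul_add, Nat.add_sub_cancel' hik], coeff_mul_monomial]
    rfl
  refine ⟨k, hk, c, fun i _ _ ↦ ?_, ?_⟩
  · rw [← pow_mul]
    exact (q.coeff (k - i)).2 (m * i)
  · rw [Nat.range_succ_eq_Icc_zero, ← Finset.insert_Icc_add_one_left_eq_Icc (Nat.zero_le k),
      Finset.sum_insert (by simp)] at hcoeff
    simpa [c, k, hmonic.coeff_natDegree] using hcoeff

variable {I} in
theorem mem_reesClosureComponent_iff_isIntegralOverIdeal [Nontrivial R] {m : ℕ} {a : R} :
    a ∈ I.reesClosureComponent m ↔ IsIntegralOverIdeal (I ^ m) a :=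
  ⟨isIntegralOverIdeal_of_mem_reesClosureComponent, mem_reesClosureComponent_of_isIntegralOverIdeal
    fun i ↦ by rw [← pow_mul]; exact pow_le_reesClosureComponent I _⟩

theorem pow_mul_reesClosureComponent_le {d e : ℕ} (hde : d ≤ e) (n : ℕ) :
    I ^ (e * n - d) * I.reesClosureComponent d ≤ I.reesClosureComponent e ^ n := by
  cases n with
  | zero => simp
  | succ n =>
    rw [show e * (n + 1) - d = e * n + (e - d) by rw [Nat.mul_succ]; omega, pow_add, mul_assoc,
      pow_succ, pow_mul]
    refine Ideal.mul_mono (Ideal.pow_right_mono (pow_le_reesClosureComponent I e) n) ?_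
    calc I ^ (e - d) * I.reesClosureComponent d
        ≤ I.reesClosureComponent (e - d) * I.reesClosureComponent d :=
          Ideal.mul_mono_left (pow_le_reesClosureComponent I _)
      _ ≤ I.reesClosureComponent e := by
          simpa [Nat.sub_add_cancel hde] using reesClosureComponent_mul_le I (e - d) d

noncomputable def reesClosureSpan (k : ℕ) :
    Submodule (reesAlgebra I) (integralClosure (reesAlgebra I) R[X]) :=
  Submodule.span _ {x | ∃ m ≤ k, ∃ a, (x : R[X]) = monomial m a}

theorem reesClosureSpan_mono : Monotone I.reesClosureSpan :=
  fun _ _ hjk ↦ Submodule.span_mono fun _ ⟨m, hm, a, hx⟩ ↦ ⟨m, hm.trans hjk, a, hx⟩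

variable {I} in
theorem coeff_mem_of_mem_reesClosureSpan {k : ℕ} {x : integralClosure (reesAlgebra I) R[X]}
    (hx : x ∈ I.reesClosureSpan k) (j : ℕ) :
    (x : R[X]).coeff j ∈ ⨆ d ≤ k, I ^ (j - d) * I.reesClosureComponent d := by
  induction hx using Submodule.span_induction generalizing j with
  | mem x hx =>
    obtain ⟨m, hm, a, hxa⟩ := hx
    rw [hxa, coeff_monomial]
    split_ifs with hmj
    · subst hmj
      refine Ideal.mem_iSup_of_mem m (Ideal.mem_iSup_of_mem hm ?_)
      simp [mem_reesClosureComponent, ← hxa]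
    · exact zero_mem _
  | zero => exact zero_mem _
  | add x y _ _ hx hy => exact add_mem (hx j) (hy j)
  | smul f x _ hx =>
    change ((f : R[X]) * (x : R[X])).coeff j ∈ _
    rw [coeff_mul]
    refine Ideal.sum_mem _ fun uv huv ↦ ?_
    have hle : I ^ uv.1 * ⨆ d ≤ k, I ^ (uv.2 - d) * I.reesClosureComponent d ≤
        ⨆ d ≤ k, I ^ (j - d) * I.reesClosureComponent d := by
      simp only [Ideal.mul_iSup, ← mul_assoc, ← pow_add]
      refine iSup₂_mono fun d _ ↦ Ideal.mul_mono_left (Ideal.pow_le_pow_right ?_)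
      rw [Finset.HasAntidiagonal.mem_antidiagonal] at huv
      omega
    exact hle (Ideal.mul_mem_mul (f.2 uv.1) (hx uv.2))

theorem exists_reesClosureComponent_mul_le_pow [IsNoetherianRing R]
    (hfin : Module.Finite (reesAlgebra I) (integralClosure (reesAlgebra I) R[X])) :
    ∃ n₀, 0 < n₀ ∧ ∀ n, I.reesClosureComponent (n₀ * n) ≤ I.reesClosureComponent n₀ ^ n := by
  have hnoeth : IsNoetherian (reesAlgebra I) (integralClosure (reesAlgebra I) R[X]) :=
    isNoetherian_of_isNoetherianRing_of_finite _ (integralClosure (reesAlgebra I) R[X])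
  obtain ⟨N, hN⟩ := monotone_stabilizes_iff_noetherian.mpr hnoeth
    ⟨I.reesClosureSpan, reesClosureSpan_mono I⟩
  have hspan_le : ∀ k, I.reesClosureSpan k ≤ I.reesClosureSpan N := fun k ↦
    (le_total k N).elim (reesClosureSpan_mono I ·) fun hNk ↦ (hN k hNk).ge
  refine ⟨N + 1, N.succ_pos, fun n a ha ↦ ?_⟩
  have hspan : (⟨monomial ((N + 1) * n) a, ha⟩ : integralClosure (reesAlgebra I) R[X]) ∈
      I.reesClosureSpan N :=
    hspan_le _ (Submodule.subset_span ⟨_, le_rfl, a, rfl⟩)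
  have hmem := coeff_mem_of_mem_reesClosureSpan hspan ((N + 1) * n)
  rw [coeff_monomial_same] at hmem
  exact iSup₂_le (fun d hd ↦ pow_mul_reesClosureComponent_le I (Nat.le_succ_of_le hd) n) hmem

end Ideal

theorem exists_power_with_all_powers_of_closure_integrally_closed_general
    (R : Type*) [CommRing R] [IsDomain R] [IsNoetherianRing R]
    (I : Ideal R)
    (hfin : Module.Finite (reesAlgebra I)
      (integralClosure (reesAlgebra I) (Polynomial R))) :
    ∃ n₀ : ℕ, 0 < n₀ ∧
      ∀ Jbar : Ideal R, (Jbar : Set R) = {a : R | IsIntegralOverIdeal (I ^ n₀) a} →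
        ∀ n : ℕ, 1 ≤ n → ∀ a : R, IsIntegralOverIdeal (Jbar ^ n) a → a ∈ Jbar ^ n := by
  obtain ⟨n₀, hn₀, hveronese⟩ := I.exists_reesClosureComponent_mul_le_pow hfin
  refine ⟨n₀, hn₀, fun Jbar hJbar n _ a ha ↦ ?_⟩
  obtain rfl : Jbar = I.reesClosureComponent n₀ := by
    ext b
    rw [← SetLike.mem_coe, hJbar]
    exact Ideal.mem_reesClosureComponent_iff_isIntegralOverIdeal.symm
  refine hveronese n (Ideal.mem_reesClosureComponent_of_isIntegralOverIdeal (fun i ↦ ?_) ha)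
  rw [← pow_mul, mul_assoc]
  exact I.reesClosureComponent_pow_le n₀ (n * i)

set_option synthInstance.maxHeartbeats 800000 in
/-- Let `R` be a Noetherian local domain, `I ⊆ R` a nonzero ideal, and
suppose the integral closure of the Rees algebra `R[It]` in `R[t]` is a finite `R[It]`-module
(e.g. `R` excellent). Then there exists `n₀ ≥ 1` such that for all `n ≥ 1` the ideal
`(overline{I^{n₀}})^n` is integrally closed, where `overline{J}` is the integral closure of the
ideal `J`. -/
theorem exists_power_with_all_powers_of_closure_integrally_closed
    (R : Type*) [CommRing R] [IsDomain R] [IsNoetherianRing R] [IsLocalRing R]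
    (I : Ideal R) (hI : I ≠ ⊥)
    (hfin : Module.Finite (reesAlgebra I)
      (integralClosure (reesAlgebra I) (Polynomial R))) :
    ∃ n₀ : ℕ, 0 < n₀ ∧
      ∀ Jbar : Ideal R, (Jbar : Set R) = {a : R | IsIntegralOverIdeal (I ^ n₀) a} →
        ∀ n : ℕ, 1 ≤ n → ∀ a : R, IsIntegralOverIdeal (Jbar ^ n) a → a ∈ Jbar ^ n :=
  exists_power_with_all_powers_of_closure_integrally_closed_general R I hfin
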